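/- arXiv:2303.03042 — 2 statements merged into one kernel-verified Lean document; each statement's English description precedes it below -/
import Mathlib

section
/- Suppose an LMI of the form of Theorem 6 holds: for matrices of a 2-D Lur'e system, the stacked matrix M = [A₁₁ A₁₂ B₁₁ B₁₂; A₂₁ A₂₂ B₂₁ B₂₂; I 0 0 0; 0 I 0 0; C₁₁ C₁₂ D₁₁ D₁₂; 0 0 I 0; C₂₁ C₂₂ D₂₁ D₂₂; 0 0 0 I] satisfies Mᵀ diag(-P₁, -P₂, P₁, P₂, [[Q,S],[Sᵀ,R]], [[Q^w,S^w],[(S^w)ᵀ,R^w]]) M ⪰ 0. Then along any trajectory of the Lur'e system whose nonlinearity satisfies the supply constraint [w;z]ᵀ[[R^w,S^w],[(S^w)ᵀ,Q^w]][w;z] ≤ 0, the dissipation inequality V₁(x₁(i₁+1,i₂)) + V₂(x₂(i₁,i₂+1)) ≤ V₁(x₁(i₁,i₂)) + V₂(x₂(i₁,i₂)) + [u;y]ᵀ[[R,Sᵀ],[S,Q]][u;y] holds pointwise, where V₁(x)=xᵀP₁x, V₂(x)=xᵀP₂x. -/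
theorem lure_LMI_implies_robust_dissipation_general
    (n₁ n₂ dz cu cy : ℕ)
    (A₁₁ : Matrix (Fin n₁) (Fin n₁) ℝ) (A₁₂ : Matrix (Fin n₁) (Fin n₂) ℝ)
    (A₂₁ : Matrix (Fin n₂) (Fin n₁) ℝ) (A₂₂ : Matrix (Fin n₂) (Fin n₂) ℝ)
    (B₁₁ : Matrix (Fin n₁) (Fin dz) ℝ) (B₁₂ : Matrix (Fin n₁) (Fin cu) ℝ)
    (B₂₁ : Matrix (Fin n₂) (Fin dz) ℝ) (B₂₂ : Matrix (Fin n₂) (Fin cu) ℝ)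
    (C₁₁ : Matrix (Fin dz) (Fin n₁) ℝ) (C₁₂ : Matrix (Fin dz) (Fin n₂) ℝ)
    (D₁₁ : Matrix (Fin dz) (Fin dz) ℝ) (D₁₂ : Matrix (Fin dz) (Fin cu) ℝ)
    (C₂₁ : Matrix (Fin cy) (Fin n₁) ℝ) (C₂₂ : Matrix (Fin cy) (Fin n₂) ℝ)
    (D₂₁ : Matrix (Fin cy) (Fin dz) ℝ) (D₂₂ : Matrix (Fin cy) (Fin cu) ℝ)
    (P₁ : Matrix (Fin n₁) (Fin n₁) ℝ) (P₂ : Matrix (Fin n₂) (Fin n₂) ℝ)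
    (Q : Matrix (Fin cy) (Fin cy) ℝ) (S : Matrix (Fin cy) (Fin cu) ℝ)
    (R : Matrix (Fin cu) (Fin cu) ℝ)
    (Qw : Matrix (Fin dz) (Fin dz) ℝ) (Sw : Matrix (Fin dz) (Fin dz) ℝ)
    (Rw : Matrix (Fin dz) (Fin dz) ℝ)
    -- the LMI, as a quadratic form inequality over all stacked vectors (ξ₁,ξ₂,w,v)
    (hLMI : ∀ (ξ₁ : Fin n₁ → ℝ) (ξ₂ : Fin n₂ → ℝ) (w : Fin dz → ℝ) (v : Fin cu → ℝ),
      (A₁₁.mulVec ξ₁ + A₁₂.mulVec ξ₂ + B₁₁.mulVec w + B₁₂.mulVec v) ⬝ᵥ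
          P₁.mulVec (A₁₁.mulVec ξ₁ + A₁₂.mulVec ξ₂ + B₁₁.mulVec w + B₁₂.mulVec v) +
        (A₂₁.mulVec ξ₁ + A₂₂.mulVec ξ₂ + B₂₁.mulVec w + B₂₂.mulVec v) ⬝ᵥ
          P₂.mulVec (A₂₁.mulVec ξ₁ + A₂₂.mulVec ξ₂ + B₂₁.mulVec w + B₂₂.mulVec v) ≤
      ξ₁ ⬝ᵥ P₁.mulVec ξ₁ + ξ₂ ⬝ᵥ P₂.mulVec ξ₂ +
        -- supply on (u, y)
        (v ⬝ᵥ R.mulVec v +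
          2 * ((C₂₁.mulVec ξ₁ + C₂₂.mulVec ξ₂ + D₂₁.mulVec w + D₂₂.mulVec v) ⬝ᵥ
            S.mulVec v) +
          (C₂₁.mulVec ξ₁ + C₂₂.mulVec ξ₂ + D₂₁.mulVec w + D₂₂.mulVec v) ⬝ᵥ
            Q.mulVec (C₂₁.mulVec ξ₁ + C₂₂.mulVec ξ₂ + D₂₁.mulVec w + D₂₂.mulVec v)) +
        -- supply on (z, w)
        (w ⬝ᵥ Rw.mulVec w +
          2 * (w ⬝ᵥ Sw.mulVec (C₁₁.mulVec ξ₁ + C₁₂.mulVec ξ₂ + D₁₁.mulVec w + D₁₂.mulVec v)) +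
          (C₁₁.mulVec ξ₁ + C₁₂.mulVec ξ₂ + D₁₁.mulVec w + D₁₂.mulVec v) ⬝ᵥ
            Qw.mulVec (C₁₁.mulVec ξ₁ + C₁₂.mulVec ξ₂ + D₁₁.mulVec w + D₁₂.mulVec v)))
    -- the nonlinearity and its quadratic supply constraint
    (φ : (Fin dz → ℝ) → (Fin dz → ℝ))
    (hφ : ∀ ζ : Fin dz → ℝ,
      (φ ζ) ⬝ᵥ Rw.mulVec (φ ζ) + 2 * ((φ ζ) ⬝ᵥ Sw.mulVec ζ) + ζ ⬝ᵥ Qw.mulVec ζ ≤ 0)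
    -- a trajectory of the Lur'e system
    (x₁ : ℕ × ℕ → (Fin n₁ → ℝ)) (x₂ : ℕ × ℕ → (Fin n₂ → ℝ))
    (z : ℕ × ℕ → (Fin dz → ℝ)) (w : ℕ × ℕ → (Fin dz → ℝ))
    (u : ℕ × ℕ → (Fin cu → ℝ)) (y : ℕ × ℕ → (Fin cy → ℝ))
    (hx₁ : ∀ i₁ i₂ : ℕ, x₁ (i₁ + 1, i₂) = A₁₁.mulVec (x₁ (i₁, i₂)) +
      A₁₂.mulVec (x₂ (i₁, i₂)) + B₁₁.mulVec (w (i₁, i₂)) + B₁₂.mulVec (u (i₁, i₂)))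
    (hx₂ : ∀ i₁ i₂ : ℕ, x₂ (i₁, i₂ + 1) = A₂₁.mulVec (x₁ (i₁, i₂)) +
      A₂₂.mulVec (x₂ (i₁, i₂)) + B₂₁.mulVec (w (i₁, i₂)) + B₂₂.mulVec (u (i₁, i₂)))
    (hz : ∀ i₁ i₂ : ℕ, z (i₁, i₂) = C₁₁.mulVec (x₁ (i₁, i₂)) +
      C₁₂.mulVec (x₂ (i₁, i₂)) + D₁₁.mulVec (w (i₁, i₂)) + D₁₂.mulVec (u (i₁, i₂)))
    (hy : ∀ i₁ i₂ : ℕ, y (i₁, i₂) = C₂₁.mulVec (x₁ (i₁, i₂)) +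
      C₂₂.mulVec (x₂ (i₁, i₂)) + D₂₁.mulVec (w (i₁, i₂)) + D₂₂.mulVec (u (i₁, i₂)))
    (hw : ∀ i₁ i₂ : ℕ, w (i₁, i₂) = φ (z (i₁, i₂)))
    (i₁ i₂ : ℕ) :
    x₁ (i₁ + 1, i₂) ⬝ᵥ P₁.mulVec (x₁ (i₁ + 1, i₂)) +
      x₂ (i₁, i₂ + 1) ⬝ᵥ P₂.mulVec (x₂ (i₁, i₂ + 1)) ≤
    x₁ (i₁, i₂) ⬝ᵥ P₁.mulVec (x₁ (i₁, i₂)) + x₂ (i₁, i₂) ⬝ᵥ P₂.mulVec (x₂ (i₁, i₂)) +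
      (u (i₁, i₂) ⬝ᵥ R.mulVec (u (i₁, i₂)) +
        2 * (y (i₁, i₂) ⬝ᵥ S.mulVec (u (i₁, i₂))) +
        y (i₁, i₂) ⬝ᵥ Q.mulVec (y (i₁, i₂))) := by
  have hLMI_at := hLMI (x₁ (i₁, i₂)) (x₂ (i₁, i₂)) (w (i₁, i₂)) (u (i₁, i₂))
  rw [← hx₁, ← hx₂, ← hz, ← hy] at hLMI_at
  -- along the trajectory the (z, w)-supply term of the LMI is the sector constraint, hence ≤ 0
  have hsector := hφ (z (i₁, i₂))
  rw [← hw] at hsector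
  linarith

/-- the robust-dissipativity LMI for a 2-D Lur'e system implies the
pointwise dissipation inequality along every trajectory whose nonlinearity φ
satisfies the quadratic supply constraint s^w(z, φ(z)) ≤ 0. -/
theorem lure_LMI_implies_robust_dissipation
    (n₁ n₂ dz cu cy : ℕ)
    (A₁₁ : Matrix (Fin n₁) (Fin n₁) ℝ) (A₁₂ : Matrix (Fin n₁) (Fin n₂) ℝ)
    (A₂₁ : Matrix (Fin n₂) (Fin n₁) ℝ) (A₂₂ : Matrix (Fin n₂) (Fin n₂) ℝ)
    (B₁₁ : Matrix (Fin n₁) (Fin dz) ℝ) (B₁₂ : Matrix (Fin n₁) (Fin cu) ℝ)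
    (B₂₁ : Matrix (Fin n₂) (Fin dz) ℝ) (B₂₂ : Matrix (Fin n₂) (Fin cu) ℝ)
    (C₁₁ : Matrix (Fin dz) (Fin n₁) ℝ) (C₁₂ : Matrix (Fin dz) (Fin n₂) ℝ)
    (D₁₁ : Matrix (Fin dz) (Fin dz) ℝ) (D₁₂ : Matrix (Fin dz) (Fin cu) ℝ)
    (C₂₁ : Matrix (Fin cy) (Fin n₁) ℝ) (C₂₂ : Matrix (Fin cy) (Fin n₂) ℝ)
    (D₂₁ : Matrix (Fin cy) (Fin dz) ℝ) (D₂₂ : Matrix (Fin cy) (Fin cu) ℝ)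
    (P₁ : Matrix (Fin n₁) (Fin n₁) ℝ) (P₂ : Matrix (Fin n₂) (Fin n₂) ℝ)
    (Q : Matrix (Fin cy) (Fin cy) ℝ) (S : Matrix (Fin cy) (Fin cu) ℝ)
    (R : Matrix (Fin cu) (Fin cu) ℝ)
    (Qw : Matrix (Fin dz) (Fin dz) ℝ) (Sw : Matrix (Fin dz) (Fin dz) ℝ)
    (Rw : Matrix (Fin dz) (Fin dz) ℝ)
    (hP₁ : P₁.PosSemidef) (hP₂ : P₂.PosSemidef)
    -- the LMI, as a quadratic form inequality over all stacked vectors (ξ₁,ξ₂,w,v)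
    (hLMI : ∀ (ξ₁ : Fin n₁ → ℝ) (ξ₂ : Fin n₂ → ℝ) (w : Fin dz → ℝ) (v : Fin cu → ℝ),
      (A₁₁.mulVec ξ₁ + A₁₂.mulVec ξ₂ + B₁₁.mulVec w + B₁₂.mulVec v) ⬝ᵥ
          P₁.mulVec (A₁₁.mulVec ξ₁ + A₁₂.mulVec ξ₂ + B₁₁.mulVec w + B₁₂.mulVec v) +
        (A₂₁.mulVec ξ₁ + A₂₂.mulVec ξ₂ + B₂₁.mulVec w + B₂₂.mulVec v) ⬝ᵥ
          P₂.mulVec (A₂₁.mulVec ξ₁ + A₂₂.mulVec ξ₂ + B₂₁.mulVec w + B₂₂.mulVec v) ≤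
      ξ₁ ⬝ᵥ P₁.mulVec ξ₁ + ξ₂ ⬝ᵥ P₂.mulVec ξ₂ +
        -- supply on (u, y)
        (v ⬝ᵥ R.mulVec v +
          2 * ((C₂₁.mulVec ξ₁ + C₂₂.mulVec ξ₂ + D₂₁.mulVec w + D₂₂.mulVec v) ⬝ᵥ
            S.mulVec v) +
          (C₂₁.mulVec ξ₁ + C₂₂.mulVec ξ₂ + D₂₁.mulVec w + D₂₂.mulVec v) ⬝ᵥ
            Q.mulVec (C₂₁.mulVec ξ₁ + C₂₂.mulVec ξ₂ + D₂₁.mulVec w + D₂₂.mulVec v)) +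
        -- supply on (z, w)
        (w ⬝ᵥ Rw.mulVec w +
          2 * (w ⬝ᵥ Sw.mulVec (C₁₁.mulVec ξ₁ + C₁₂.mulVec ξ₂ + D₁₁.mulVec w + D₁₂.mulVec v)) +
          (C₁₁.mulVec ξ₁ + C₁₂.mulVec ξ₂ + D₁₁.mulVec w + D₁₂.mulVec v) ⬝ᵥ
            Qw.mulVec (C₁₁.mulVec ξ₁ + C₁₂.mulVec ξ₂ + D₁₁.mulVec w + D₁₂.mulVec v)))
    -- the nonlinearity and its quadratic supply constraint
    (φ : (Fin dz → ℝ) → (Fin dz → ℝ))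
    (hφ : ∀ ζ : Fin dz → ℝ,
      (φ ζ) ⬝ᵥ Rw.mulVec (φ ζ) + 2 * ((φ ζ) ⬝ᵥ Sw.mulVec ζ) + ζ ⬝ᵥ Qw.mulVec ζ ≤ 0)
    -- a trajectory of the Lur'e system
    (x₁ : ℕ × ℕ → (Fin n₁ → ℝ)) (x₂ : ℕ × ℕ → (Fin n₂ → ℝ))
    (z : ℕ × ℕ → (Fin dz → ℝ)) (w : ℕ × ℕ → (Fin dz → ℝ))
    (u : ℕ × ℕ → (Fin cu → ℝ)) (y : ℕ × ℕ → (Fin cy → ℝ))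
    (hx₁ : ∀ i₁ i₂ : ℕ, x₁ (i₁ + 1, i₂) = A₁₁.mulVec (x₁ (i₁, i₂)) +
      A₁₂.mulVec (x₂ (i₁, i₂)) + B₁₁.mulVec (w (i₁, i₂)) + B₁₂.mulVec (u (i₁, i₂)))
    (hx₂ : ∀ i₁ i₂ : ℕ, x₂ (i₁, i₂ + 1) = A₂₁.mulVec (x₁ (i₁, i₂)) +
      A₂₂.mulVec (x₂ (i₁, i₂)) + B₂₁.mulVec (w (i₁, i₂)) + B₂₂.mulVec (u (i₁, i₂)))
    (hz : ∀ i₁ i₂ : ℕ, z (i₁, i₂) = C₁₁.mulVec (x₁ (i₁, i₂)) +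
      C₁₂.mulVec (x₂ (i₁, i₂)) + D₁₁.mulVec (w (i₁, i₂)) + D₁₂.mulVec (u (i₁, i₂)))
    (hy : ∀ i₁ i₂ : ℕ, y (i₁, i₂) = C₂₁.mulVec (x₁ (i₁, i₂)) +
      C₂₂.mulVec (x₂ (i₁, i₂)) + D₂₁.mulVec (w (i₁, i₂)) + D₂₂.mulVec (u (i₁, i₂)))
    (hw : ∀ i₁ i₂ : ℕ, w (i₁, i₂) = φ (z (i₁, i₂)))
    (i₁ i₂ : ℕ) :
    x₁ (i₁ + 1, i₂) ⬝ᵥ P₁.mulVec (x₁ (i₁ + 1, i₂)) +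
      x₂ (i₁, i₂ + 1) ⬝ᵥ P₂.mulVec (x₂ (i₁, i₂ + 1)) ≤
    x₁ (i₁, i₂) ⬝ᵥ P₁.mulVec (x₁ (i₁, i₂)) + x₂ (i₁, i₂) ⬝ᵥ P₂.mulVec (x₂ (i₁, i₂)) +
      (u (i₁, i₂) ⬝ᵥ R.mulVec (u (i₁, i₂)) +
        2 * (y (i₁, i₂) ⬝ᵥ S.mulVec (u (i₁, i₂))) +
        y (i₁, i₂) ⬝ᵥ Q.mulVec (y (i₁, i₂))) :=
  lure_LMI_implies_robust_dissipation_general n₁ n₂ dz cu cy A₁₁ A₁₂ A₂₁ A₂₂ B₁₁ B₁₂ B₂₁ B₂₂ C₁₁ C₁₂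
    D₁₁ D₁₂ C₂₁ C₂₂ D₂₁ D₂₂ P₁ P₂ Q S R Qw Sw Rw hLMI φ hφ x₁ x₂ z w u y hx₁ hx₂ hz hy hw i₁ i₂
end

section
/- Suppose two families of inequalities hold: (a) γ²∑_{i₁,i₂}‖ũ(i₁,i₂)‖² + ∑_{i₁,i₂} ỹ_C(i₁,i₂)ᵀ Q_C ỹ_C(i₁,i₂) ≥ 0 (incremental dissipativity of the convolutional part with supply Q_C ⪯ 0), and (b) v ᵀ R_L v − ‖ỹ_L‖² ≥ 0 where R_L = diag(−Q_C,...,−Q_C) and v is the flattening of the signal ỹ_C (incremental dissipativity of the linear part). Then γ²∑_{i₁,i₂}‖ũ(i₁,i₂)‖² − ‖ỹ_L‖² ≥ 0, i.e., the overall incremental gain is at most γ. -/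
open Matrix

lemma tsum_dotProduct_neg_mulVec {ι n R : Type*} [Fintype n] [Ring R] [TopologicalSpace R]
    [IsTopologicalAddGroup R] [T2Space R]
    (Q : Matrix n n R) (x : ι → n → R) :
    ∑' i, x i ⬝ᵥ (-Q) *ᵥ x i = -∑' i, x i ⬝ᵥ Q *ᵥ x i := by
  simp only [neg_mulVec, dotProduct_neg, tsum_neg]

theorem combined_incremental_gain_bound_general
    (c₀ c p : ℕ) (γ : ℝ)
    (QC : Matrix (Fin c) (Fin c) ℝ)
    (ut : ℤ × ℤ → EuclideanSpace ℝ (Fin c₀))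
    (yC : ℤ × ℤ → (Fin c → ℝ))
    (yL : EuclideanSpace ℝ (Fin p))
    -- (a) incremental dissipativity of the convolutional part
    (ha : 0 ≤ γ ^ 2 * (∑' q : ℤ × ℤ, ‖ut q‖ ^ 2) +
      ∑' q : ℤ × ℤ, yC q ⬝ᵥ QC.mulVec (yC q))
    -- (b) incremental dissipativity of the linear part, with
    -- vᵀR_Lv = ∑_{i₁,i₂} ỹ_C(i₁,i₂)ᵀ(−Q_C)ỹ_C(i₁,i₂) for the flattening v of ỹ_C
    (hb : 0 ≤ (∑' q : ℤ × ℤ, yC q ⬝ᵥ (-QC).mulVec (yC q)) - ‖yL‖ ^ 2) :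
    0 ≤ γ ^ 2 * (∑' q : ℤ × ℤ, ‖ut q‖ ^ 2) - ‖yL‖ ^ 2 := by
  rw [tsum_dotProduct_neg_mulVec] at hb
  linarith

/-- combining incremental dissipativity of the convolutional part
(with supply matrix Q_C ⪯ 0) and of the linear part (with R_L built from -Q_C)
yields the overall incremental gain bound γ. -/
theorem combined_incremental_gain_bound
    (c₀ c p : ℕ) (γ : ℝ) (hγ : 0 ≤ γ)
    (QC : Matrix (Fin c) (Fin c) ℝ) (hQCsymm : QC.IsSymm) (hQC : (-QC).PosSemidef)
    (ut : ℤ × ℤ → EuclideanSpace ℝ (Fin c₀))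
    (yC : ℤ × ℤ → (Fin c → ℝ))
    (yL : EuclideanSpace ℝ (Fin p))
    (hu : Summable (fun q : ℤ × ℤ => ‖ut q‖ ^ 2))
    (hyC : Summable (fun q : ℤ × ℤ => yC q ⬝ᵥ QC.mulVec (yC q)))
    -- (a) incremental dissipativity of the convolutional part
    (ha : 0 ≤ γ ^ 2 * (∑' q : ℤ × ℤ, ‖ut q‖ ^ 2) +
      ∑' q : ℤ × ℤ, yC q ⬝ᵥ QC.mulVec (yC q))
    -- (b) incremental dissipativity of the linear part, with
    -- vᵀR_Lv = ∑_{i₁,i₂} ỹ_C(i₁,i₂)ᵀ(−Q_C)ỹ_C(i₁,i₂) for the flattening v of ỹ_C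
    (hb : 0 ≤ (∑' q : ℤ × ℤ, yC q ⬝ᵥ (-QC).mulVec (yC q)) - ‖yL‖ ^ 2) :
    0 ≤ γ ^ 2 * (∑' q : ℤ × ℤ, ‖ut q‖ ^ 2) - ‖yL‖ ^ 2 :=
  combined_incremental_gain_bound_general c₀ c p γ QC ut yC yL ha hb
end
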